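/- A densely defined A-linear operator t: Dom(t) ⊆ E → F between Hilbert A-modules is regular if and only if its graph G(t) is orthogonally complemented in E ⊕ F and the closure of Ran(P_F P_{G(t)^⊥}) equals its biorthogonal complement Ran(P_F P_{G(t)^⊥})^⊥⊥. -/

import Mathlib

/- Framework: Hilbert C*-modules over a C*-algebra `A` (via Mathlib's `CStarModule`),
densely defined operators as `LinearPMap`s, `A`-valued orthogonality, adjoints,
regularity, graphs inside `E ⊕ F`. -/

open scoped InnerProductSpace RightActions WithCStarModule

namespace RegularOperators

variable (A : Type*) [NonUnitalCStarAlgebra A] [PartialOrder A] [StarOrderedRing A]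

section Defs

variable {E F : Type*}
  [NormedAddCommGroup E] [Module ℂ E] [SMul A E] [CStarModule A E]
  [NormedAddCommGroup F] [Module ℂ F] [SMul A F] [CStarModule A F]

/-- Orthogonal complement of a subset w.r.t. the `A`-valued inner product. -/
def ortho (S : Set E) : Set E := {y | ∀ u ∈ S, ⟪u, y⟫_A = 0}

/-- `S` is orthogonally complemented (an orthogonal summand): every element of `E`
decomposes as a sum of an element of `S` and an element of `S^⊥`. -/
def OrthoComplemented (S : Set E) : Prop := ∀ z : E, ∃ u ∈ S, ∃ v ∈ ortho A S, z = u + v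

/-- A partially defined operator is `A`-linear (for the right `A`-module action). -/
def AModuleMap (t : E →ₗ.[ℂ] F) : Prop :=
  ∀ (a : A) (x : t.domain), ∃ hx : a • (x : E) ∈ t.domain, t ⟨a • (x : E), hx⟩ = a • (t x)

/-- Kernel of a partially defined operator, as a subset of `E`. -/
def kerSet (t : E →ₗ.[ℂ] F) : Set E := {x | ∃ hx : x ∈ t.domain, t ⟨x, hx⟩ = 0}

/-- Range of a partially defined operator. -/
def ranSet (t : E →ₗ.[ℂ] F) : Set F := {y | ∃ x : t.domain, t x = y}

/-- Domain of the adjoint: those `y` for which some `z` satisfies `⟪tx, y⟫ = ⟪x, z⟫`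
for all `x` in the domain of `t`. -/
def adjDomain (t : E →ₗ.[ℂ] F) : Set F :=
  {y | ∃ z : E, ∀ x : t.domain, ⟪t x, y⟫_A = ⟪(x : E), z⟫_A}

/-- `s` is the adjoint operator `t*` of `t`. -/
structure IsAdjoint (t : E →ₗ.[ℂ] F) (s : F →ₗ.[ℂ] E) : Prop where
  dom : (s.domain : Set F) = adjDomain A t
  inner_eq : ∀ (x : t.domain) (y : s.domain), ⟪t x, (y : F)⟫_A = ⟪(x : E), s y⟫_A

/-- The range of `1 + t*t` (where `s` plays the role of `t*`). -/
def onePlusRange (t : E →ₗ.[ℂ] F) (s : F →ₗ.[ℂ] E) : Set E :=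
  {u | ∃ (x : t.domain) (h : t x ∈ s.domain), (x : E) + s ⟨t x, h⟩ = u}

/-- `t` is a regular operator with adjoint `s`: it is `A`-linear, densely defined,
closed, adjointable with densely defined adjoint, and `1 + t*t` has dense range. -/
structure IsRegular (t : E →ₗ.[ℂ] F) (s : F →ₗ.[ℂ] E) : Prop where
  amod : AModuleMap A t
  denseDom : Dense (t.domain : Set E)
  closedGraph : IsClosed (t.graph : Set (E × F))
  adj : IsAdjoint A t s
  denseAdjDom : Dense (s.domain : Set F)
  denseOnePlusRange : Dense (onePlusRange t s)

/-- The graph of `t` inside the Hilbert `A`-module `E ⊕ F`. -/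
def graphSet (t : E →ₗ.[ℂ] F) : Set (C⋆ᵐᵒᵈ(A, E × F)) :=
  {w | ∃ x : t.domain, WithCStarModule.equiv A (E × F) w = ((x : E), t x)}

/-- The range of `P_F ∘ P_{G(t)^⊥}`, i.e. the image of `G(t)^⊥ ⊆ E ⊕ F` under the
canonical projection onto `F`. -/
def pfRange (t : E →ₗ.[ℂ] F) : Set F :=
  {y | ∃ w ∈ ortho A (graphSet A t), (WithCStarModule.equiv A (E × F) w).2 = y}

end Defs

end RegularOperators

open RegularOperators
variable {A : Type*} [NonUnitalCStarAlgebra A] [PartialOrder A] [StarOrderedRing A]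
variable {E F : Type*}
  [NormedAddCommGroup E] [Module ℂ E] [SMul A E] [CStarModule A E] [CompleteSpace E]
  [NormedAddCommGroup F] [Module ℂ F] [SMul A F] [CStarModule A F] [CompleteSpace F]

/-!
The orthogonal complement of the graph `G(t)` is the flipped graph `{(t* y, -y)}` of the
adjoint, so `Ran(P_F P_{G(t)^⊥}) = Dom t*`. If `G(t)` is complemented it is closed,
decomposing `(z, 0)` solves `(1 + t*t) x = z`, and decomposing `(0, y)` shows
`(Dom t*)^⊥ = 0`, so `Dom t*` is dense by the biorthogonality hypothesis. Conversely, for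
regular `t` the sum `G(t) + G(t)^⊥` is closed by Pythagoras, and it contains
`(x + t*t x, 0) = (x, t x) + (t*t x, -t x)` and `(0, y) = (t* y, 0) + (-t* y, y)`, hence
everything, since `Ran(1 + t*t)` and `Dom t*` are dense.
-/

namespace RegularOperators

section CStarModule

variable {A : Type*} [NonUnitalCStarAlgebra A] [PartialOrder A]
  {H : Type*} [NormedAddCommGroup H] [Module ℂ H] [SMul A H] [CStarModule A H]

theorem inner_eq_zero_comm {u v : H} : ⟪u, v⟫_A = 0 ↔ ⟪v, u⟫_A = 0 := by
  rw [← CStarModule.star_inner u v, star_eq_zero]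

theorem subset_ortho_ortho (S : Set H) : S ⊆ ortho A (ortho A S) :=
  fun _ hu _ hv => inner_eq_zero_comm.mp (hv _ hu)

theorem ortho_singleton_zero : ortho A ({0} : Set H) = Set.univ :=
  Set.eq_univ_of_forall fun _ _ hu => by
    rw [Set.mem_singleton_iff.mp hu, CStarModule.inner_zero_left]

theorem dense_of_closure_eq_ortho_ortho {S : Set H} (h : closure S = ortho A (ortho A S))
    (h0 : ortho A S = {0}) : Dense S := by
  rw [dense_iff_closure_eq, h, h0, ortho_singleton_zero]

theorem OrthoComplemented.ortho_ortho_subset {S : Set H} (hS : OrthoComplemented A S) :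
    ortho A (ortho A S) ⊆ S := by
  intro z hz
  obtain ⟨u, hu, v, hv, rfl⟩ := hS z
  have hvv : ⟪v, v⟫_A = 0 := by
    have := hz v hv
    rwa [CStarModule.inner_add_right, inner_eq_zero_comm.mp (hv u hu), zero_add] at this
  rwa [CStarModule.inner_self.mp hvv, add_zero]

variable (A) in
def orthoSubmodule (S : Set H) : Submodule ℂ H where
  carrier := ortho A S
  zero_mem' _ _ := CStarModule.inner_zero_right
  add_mem' hy hy' u hu := by rw [CStarModule.inner_add_right, hy u hu, hy' u hu, add_zero]
  smul_mem' c y hy u hu := by rw [CStarModule.inner_smul_right_complex, hy u hu, smul_zero]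

variable [StarOrderedRing A]

theorem continuous_inner_left (a : H) : Continuous fun x : H => ⟪x, a⟫_A := by
  let _ : NormedSpace ℂ H := .ofCore (CStarModule.normedSpaceCore A)
  fun_prop

theorem continuous_inner_right (a : H) : Continuous fun x : H => ⟪a, x⟫_A := by
  let _ : NormedSpace ℂ H := .ofCore (CStarModule.normedSpaceCore A)
  fun_prop

theorem eq_of_inner_eq_on_dense {D : Set H} (hD : Dense D) {z z' : H}
    (h : ∀ x ∈ D, ⟪x, z⟫_A = ⟪x, z'⟫_A) : z = z' := by
  have hD' : ∀ x ∈ D, ⟪x, z - z'⟫_A = 0 := fun x hx => by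
    rw [CStarModule.inner_sub_right, h x hx, sub_self]
  have : ⟪z - z', z - z'⟫_A = 0 :=
    hD.induction (P := fun x => ⟪x, z - z'⟫_A = 0) hD'
      (isClosed_eq (continuous_inner_left _) continuous_const) _
  exact sub_eq_zero.mp (CStarModule.inner_self.mp this)

theorem isClosed_ortho (S : Set H) : IsClosed (ortho A S) := by
  simp only [ortho, Set.ofPred_forall]
  exact isClosed_biInter fun u _ => isClosed_eq (continuous_inner_right u) continuous_const

theorem ortho_eq_singleton_zero_of_dense {S : Set H} (hS : Dense S) : ortho A S = {0} := by
  refine Set.eq_singleton_iff_unique_mem.mpr ⟨fun _ _ => CStarModule.inner_zero_right, ?_⟩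
  exact fun y hy => eq_of_inner_eq_on_dense hS fun x hx => by
    rw [hy x hx, CStarModule.inner_zero_right]

theorem closure_eq_ortho_ortho_of_dense {S : Set H} (hS : Dense S) :
    closure S = ortho A (ortho A S) := by
  rw [hS.closure_eq, ortho_eq_singleton_zero_of_dense hS, ortho_singleton_zero]

theorem OrthoComplemented.isClosed {S : Set H} (hS : OrthoComplemented A S) : IsClosed S := by
  refine isClosed_of_closure_subset ?_
  calc closure S ⊆ ortho A (ortho A S) :=
        closure_minimal (subset_ortho_ortho S) (isClosed_ortho _)
    _ ⊆ S := hS.ortho_ortho_subset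

theorem norm_le_norm_add_of_inner_eq_zero {u v : H} (h : ⟪u, v⟫_A = 0) :
    ‖u‖ ≤ ‖u + v‖ := by
  have hsq : ‖u‖ ^ 2 ≤ ‖u + v‖ ^ 2 := by
    have hexp : ⟪u + v, u + v⟫_A = ⟪u, u⟫_A + ⟪v, v⟫_A := by
      simp only [CStarModule.inner_add_left, CStarModule.inner_add_right, h,
        inner_eq_zero_comm.mp h, add_zero, zero_add]
    rw [CStarModule.norm_sq_eq (A := A), CStarModule.norm_sq_eq (A := A), hexp]
    exact CStarAlgebra.norm_le_norm_of_nonneg_of_le CStarModule.inner_self_nonneg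
      (le_add_of_nonneg_right CStarModule.inner_self_nonneg)
  exact (pow_le_pow_iff_left₀ (norm_nonneg _) (norm_nonneg _) two_ne_zero).mp hsq

variable [CompleteSpace H]

open Filter Topology in
theorem isClosed_sup_orthoSubmodule {S : Submodule ℂ H} (hS : IsClosed (S : Set H)) :
    IsClosed ((S ⊔ orthoSubmodule A (S : Set H) : Submodule ℂ H) : Set H) := by
  refine isClosed_of_closure_subset fun p hp => ?_
  obtain ⟨q, hqM, hqp⟩ := mem_closure_iff_seq_limit.mp hp
  choose u hu v hv huv using fun n => Submodule.mem_sup.mp (hqM n)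
  have hdist : ∀ m n, dist (u m) (u n) ≤ dist (q m) (q n) := fun m n => by
    have horth : ⟪u m - u n, v m - v n⟫_A = 0 :=
      sub_mem (hv m) (hv n) _ (sub_mem (hu m) (hu n))
    rw [dist_eq_norm, dist_eq_norm, ← huv m, ← huv n, add_sub_add_comm]
    exact norm_le_norm_add_of_inner_eq_zero horth
  have hu_cauchy : CauchySeq u := cauchySeq_iff_tendsto_dist_atTop_0.mpr <|
    squeeze_zero (fun _ => dist_nonneg) (fun n => hdist n.1 n.2)
      (cauchySeq_iff_tendsto_dist_atTop_0.mp hqp.cauchySeq)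
  obtain ⟨u₀, hu₀⟩ := cauchySeq_tendsto_of_complete hu_cauchy
  have hv₀ : Tendsto v atTop (𝓝 (p - u₀)) := by
    simpa only [← huv, add_sub_cancel_left] using hqp.sub hu₀
  exact Submodule.mem_sup.mpr ⟨u₀, hS.mem_of_tendsto hu₀ (.of_forall hu), p - u₀,
    (isClosed_ortho _).mem_of_tendsto hv₀ (.of_forall hv), add_sub_cancel _ _⟩

theorem orthoComplemented_of_dense_sup {S : Submodule ℂ H} (hS : IsClosed (S : Set H))
    (hdense : Dense ((S ⊔ orthoSubmodule A (S : Set H) : Submodule ℂ H) : Set H)) :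
    OrthoComplemented A (S : Set H) := by
  intro z
  have hz : z ∈ S ⊔ orthoSubmodule A (S : Set H) := by
    rw [← SetLike.mem_coe, ← (isClosed_sup_orthoSubmodule hS).closure_eq, hdense.closure_eq]
    trivial
  obtain ⟨u, hu, v, hv, rfl⟩ := Submodule.mem_sup.mp hz
  exact ⟨u, hu, v, hv, rfl⟩

end CStarModule

section Operators

open WithCStarModule

variable {A E F : Type*} [NormedAddCommGroup E] [Module ℂ E]
  [NormedAddCommGroup F] [Module ℂ F]

theorem graphSet_eq_preimage (t : E →ₗ.[ℂ] F) :
    graphSet A t = equiv A (E × F) ⁻¹' t.graph := by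
  ext w
  simp [graphSet, LinearPMap.mem_graph_iff, Prod.ext_iff, eq_comm]

theorem isClosed_graphSet_iff {t : E →ₗ.[ℂ] F} :
    IsClosed (graphSet A t) ↔ IsClosed (t.graph : Set (E × F)) := by
  rw [graphSet_eq_preimage]
  exact (equivL ℂ).toHomeomorph.isClosed_preimage

variable (A) in
def graphSubmodule (t : E →ₗ.[ℂ] F) : Submodule ℂ C⋆ᵐᵒᵈ(A, E × F) :=
  t.graph.comap (linearEquiv ℂ A (E × F)).toLinearMap

theorem coe_graphSubmodule (t : E →ₗ.[ℂ] F) :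
    (graphSubmodule A t : Set C⋆ᵐᵒᵈ(A, E × F)) = graphSet A t :=
  (graphSet_eq_preimage t).symm

theorem eq_top_of_inl_mem_of_inr_mem {C : Submodule ℂ C⋆ᵐᵒᵈ(A, E × F)}
    (hE : ∀ a : E, (equiv A (E × F)).symm (a, 0) ∈ C)
    (hF : ∀ b : F, (equiv A (E × F)).symm (0, b) ∈ C) : C = ⊤ := by
  refine eq_top_iff.mpr fun p _ => ?_
  have hsplit : p = (equiv A (E × F)).symm ((equiv A (E × F) p).1, 0) +
      (equiv A (E × F)).symm (0, (equiv A (E × F) p).2) := by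
    apply (equiv A (E × F)).injective
    ext <;> simp
  rw [hsplit]
  exact C.add_mem (hE _) (hF _)

variable [NonUnitalCStarAlgebra A] [PartialOrder A]
  [SMul A E] [CStarModule A E] [SMul A F] [CStarModule A F]

variable (A) in
def adjointGraph (t : E →ₗ.[ℂ] F) : Submodule ℂ (F × E) where
  carrier := {p | ∀ x : t.domain, ⟪t x, p.1⟫_A = ⟪(x : E), p.2⟫_A}
  zero_mem' _ := by simp only [Prod.fst_zero, Prod.snd_zero, CStarModule.inner_zero_right]
  add_mem' hp hq x := by
    simp only [Prod.fst_add, Prod.snd_add, CStarModule.inner_add_right, hp x, hq x]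
  smul_mem' c p hp x := by
    simp only [Prod.smul_fst, Prod.smul_snd, CStarModule.inner_smul_right_complex, hp x]

-- Only meaningful for densely defined `t`: otherwise `adjointGraph` need not be single-valued
-- and `toLinearPMap` returns `0`.
variable (A) in
noncomputable def adjoint (t : E →ₗ.[ℂ] F) : F →ₗ.[ℂ] E :=
  (adjointGraph A t).toLinearPMap

variable [StarOrderedRing A]

theorem isAdjoint_adjoint {t : E →ₗ.[ℂ] F}
    (hdense : Dense (t.domain : Set E)) : IsAdjoint A t (adjoint A t) := by
  have hgraph : ∀ p ∈ adjointGraph A t, p.1 = 0 → p.2 = 0 := by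
    rintro ⟨y, z⟩ hp (rfl : y = 0)
    refine eq_of_inner_eq_on_dense (A := A) hdense fun x hx => ?_
    rw [← hp ⟨x, hx⟩, CStarModule.inner_zero_right, CStarModule.inner_zero_right]
  refine ⟨?_, fun x y => (adjointGraph A t).mem_graph_toLinearPMap hgraph y x⟩
  ext y
  simp [adjoint, Submodule.toLinearPMap_domain, adjDomain, adjointGraph]

theorem mem_ortho_graphSet {t : E →ₗ.[ℂ] F} {w : C⋆ᵐᵒᵈ(A, E × F)} :
    w ∈ ortho A (graphSet A t) ↔
      ∀ x : t.domain,
        ⟪(x : E), (equiv A (E × F) w).1⟫_A + ⟪t x, (equiv A (E × F) w).2⟫_A = 0 := by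
  refine ⟨fun h x => h _ ⟨x, rfl⟩, ?_⟩
  rintro h _ ⟨x, hx⟩
  rw [prod_inner, ← equiv_fst, ← equiv_snd, hx]
  exact h x

theorem IsAdjoint.mem_ortho_graphSet_iff {t : E →ₗ.[ℂ] F}
    {s : F →ₗ.[ℂ] E} (hs : IsAdjoint A t s) (hdense : Dense (t.domain : Set E))
    {w : C⋆ᵐᵒᵈ(A, E × F)} :
    w ∈ ortho A (graphSet A t) ↔ ∃ y : s.domain, equiv A (E × F) w = (s y, -(y : F)) := by
  rw [mem_ortho_graphSet]
  constructor
  · intro h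
    have hadj : ∀ x : t.domain,
        ⟪t x, -(equiv A (E × F) w).2⟫_A = ⟪(x : E), (equiv A (E × F) w).1⟫_A := by
      intro x
      rw [CStarModule.inner_neg_right, neg_eq_iff_add_eq_zero, add_comm, h x]
    have hmem : -(equiv A (E × F) w).2 ∈ s.domain := by
      rw [← SetLike.mem_coe, hs.dom]
      exact ⟨_, hadj⟩
    refine ⟨⟨_, hmem⟩, Prod.ext ?_ (neg_neg _).symm⟩
    refine (eq_of_inner_eq_on_dense (A := A) hdense fun x hx => ?_).symm
    rw [← hadj ⟨x, hx⟩, hs.inner_eq ⟨x, hx⟩ ⟨_, hmem⟩]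
  · rintro ⟨y, hy⟩ x
    rw [hy, CStarModule.inner_neg_right, hs.inner_eq x y, add_neg_cancel]

theorem pfRange_eq_adjDomain (t : E →ₗ.[ℂ] F) :
    pfRange A t = adjDomain A t := by
  ext y
  constructor
  · rintro ⟨w, hw, rfl⟩
    refine ⟨-(equiv A (E × F) w).1, fun x => ?_⟩
    rw [CStarModule.inner_neg_right, eq_neg_iff_add_eq_zero, add_comm]
    exact mem_ortho_graphSet.mp hw x
  · rintro ⟨z, hz⟩
    refine ⟨(equiv A (E × F)).symm (-z, y), mem_ortho_graphSet.mpr fun x => ?_, rfl⟩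
    rw [Equiv.apply_symm_apply, hz x, CStarModule.inner_neg_right, neg_add_cancel]

theorem ortho_pfRange_of_orthoComplemented {t : E →ₗ.[ℂ] F}
    (h : OrthoComplemented A (graphSet A t)) : ortho A (pfRange A t) = {0} := by
  refine Set.eq_singleton_iff_unique_mem.mpr
    ⟨fun _ _ => CStarModule.inner_zero_right, fun y hy => ?_⟩
  have hmem : (equiv A (E × F)).symm (0, y) ∈ ortho A (ortho A (graphSet A t)) := by
    intro w hw
    rw [prod_inner, equiv_symm_fst, equiv_symm_snd, CStarModule.inner_zero_right, zero_add]
    exact hy _ ⟨w, hw, rfl⟩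
  obtain ⟨x, hx⟩ := h.ortho_ortho_subset hmem
  rw [Equiv.apply_symm_apply, Prod.mk.injEq] at hx
  rw [hx.2, show x = 0 from Subtype.ext hx.1.symm, LinearPMap.map_zero]

theorem IsAdjoint.onePlusRange_eq_univ {t : E →ₗ.[ℂ] F}
    {s : F →ₗ.[ℂ] E} (hs : IsAdjoint A t s) (hdense : Dense (t.domain : Set E))
    (h : OrthoComplemented A (graphSet A t)) : onePlusRange t s = Set.univ := by
  refine Set.eq_univ_of_forall fun z => ?_
  obtain ⟨g, ⟨x, hx⟩, w, hw, hsum⟩ := h ((equiv A (E × F)).symm (z, 0))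
  obtain ⟨y, hy⟩ := (hs.mem_ortho_graphSet_iff hdense).mp hw
  have hsum' : (z, 0) = ((x : E) + s y, t x - y) := by
    simpa [hx, hy, sub_eq_add_neg] using congrArg (equiv A (E × F)) hsum
  obtain ⟨hz, hy0⟩ := Prod.mk.inj hsum'
  have htx : t x = y := sub_eq_zero.mp hy0.symm
  refine ⟨x, htx ▸ y.2, ?_⟩
  rw [show (⟨t x, htx ▸ y.2⟩ : s.domain) = y from Subtype.ext htx, hz]

theorem isRegular_adjoint_of_orthoComplemented {t : E →ₗ.[ℂ] F}
    (hmod : AModuleMap A t) (hdense : Dense (t.domain : Set E))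
    (hoc : OrthoComplemented A (graphSet A t))
    (hbi : closure (pfRange A t) = ortho A (ortho A (pfRange A t))) :
    IsRegular A t (adjoint A t) where
  amod := hmod
  denseDom := hdense
  closedGraph := isClosed_graphSet_iff.mp hoc.isClosed
  adj := isAdjoint_adjoint hdense
  denseAdjDom := by
    rw [(isAdjoint_adjoint hdense).dom, ← pfRange_eq_adjDomain]
    exact dense_of_closure_eq_ortho_ortho hbi (ortho_pfRange_of_orthoComplemented hoc)
  denseOnePlusRange := by
    rw [(isAdjoint_adjoint hdense).onePlusRange_eq_univ hdense hoc]
    exact dense_univ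

theorem IsRegular.dense_pfRange {t : E →ₗ.[ℂ] F} {s : F →ₗ.[ℂ] E}
    (hreg : IsRegular A t s) : Dense (pfRange A t) := by
  rw [pfRange_eq_adjDomain, ← hreg.adj.dom]
  exact hreg.denseAdjDom

theorem IsRegular.dense_graphSubmodule_sup_ortho {t : E →ₗ.[ℂ] F}
    {s : F →ₗ.[ℂ] E} (hreg : IsRegular A t s) :
    Dense ((graphSubmodule A t ⊔ orthoSubmodule A (graphSet A t) :
      Submodule ℂ C⋆ᵐᵒᵈ(A, E × F)) : Set C⋆ᵐᵒᵈ(A, E × F)) := by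
  set M := graphSubmodule A t ⊔ orthoSubmodule A (graphSet A t)
  set C := M.topologicalClosure
  have hsum_mem : ∀ g ∈ graphSet A t, ∀ w ∈ ortho A (graphSet A t), g + w ∈ C :=
    fun g hg w hw => Submodule.le_topologicalClosure _
      (Submodule.add_mem_sup (by rwa [← SetLike.mem_coe, coe_graphSubmodule]) hw)
  have hE : ∀ a : E, (equiv A (E × F)).symm (a, 0) ∈ C := by
    refine hreg.denseOnePlusRange.induction ?_ (M.isClosed_topologicalClosure.preimage
      (f := fun a => (equiv A (E × F)).symm (a, 0))
      ((equivL ℂ).symm.continuous.comp (continuous_id.prodMk continuous_const)))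
    rintro _ ⟨x, hx, rfl⟩
    have hsplit : (equiv A (E × F)).symm ((x : E) + s ⟨t x, hx⟩, 0) =
        (equiv A (E × F)).symm ((x : E), t x) +
          (equiv A (E × F)).symm (s ⟨t x, hx⟩, -t x) := by
      apply (equiv A (E × F)).injective
      simp
    rw [hsplit]
    refine hsum_mem _ ⟨x, Equiv.apply_symm_apply _ _⟩ _ ?_
    exact (hreg.adj.mem_ortho_graphSet_iff hreg.denseDom).mpr
      ⟨⟨t x, hx⟩, Equiv.apply_symm_apply _ _⟩
  have hF : ∀ b : F, (equiv A (E × F)).symm (0, b) ∈ C := by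
    refine hreg.dense_pfRange.induction ?_ (M.isClosed_topologicalClosure.preimage
      (f := fun b => (equiv A (E × F)).symm (0, b))
      ((equivL ℂ).symm.continuous.comp (continuous_const.prodMk continuous_id)))
    rintro _ ⟨w, hw, rfl⟩
    have hsplit : (equiv A (E × F)).symm (0, (equiv A (E × F) w).2) =
        w - (equiv A (E × F)).symm ((equiv A (E × F) w).1, 0) := by
      apply (equiv A (E × F)).injective
      ext <;> simp
    rw [hsplit]
    exact C.sub_mem (Submodule.le_topologicalClosure _ (Submodule.mem_sup_right hw)) (hE _)
  rw [Submodule.dense_iff_topologicalClosure_eq_top]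
  exact eq_top_of_inl_mem_of_inr_mem hE hF

theorem IsRegular.orthoComplemented_graphSet [CompleteSpace E] [CompleteSpace F]
    {t : E →ₗ.[ℂ] F} {s : F →ₗ.[ℂ] E} (hreg : IsRegular A t s) :
    OrthoComplemented A (graphSet A t) := by
  have hclosed : IsClosed (graphSubmodule A t : Set C⋆ᵐᵒᵈ(A, E × F)) := by
    rw [coe_graphSubmodule, isClosed_graphSet_iff]
    exact hreg.closedGraph
  rw [← coe_graphSubmodule]
  exact orthoComplemented_of_dense_sup hclosed
    (by rw [coe_graphSubmodule]; exact hreg.dense_graphSubmodule_sup_ortho)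

end Operators

end RegularOperators

/-- a densely defined `A`-linear operator `t` is regular iff its graph is
orthogonally complemented in `E ⊕ F` and the closure of `Ran(P_F P_{G(t)^⊥})` equals
its biorthogonal complement. -/
theorem isRegular_iff_graph_orthoComplemented (t : E →ₗ.[ℂ] F)
    (hmod : AModuleMap A t) (hdense : Dense (t.domain : Set E)) :
    (OrthoComplemented A (graphSet A t) ∧
        closure (pfRange A t) = ortho A (ortho A (pfRange A t))) ↔
      ∃ s : F →ₗ.[ℂ] E, IsRegular A t s :=
  ⟨fun ⟨hoc, hbi⟩ =>
      ⟨adjoint A t, isRegular_adjoint_of_orthoComplemented hmod hdense hoc hbi⟩,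
    fun ⟨_, hreg⟩ =>
      ⟨hreg.orthoComplemented_graphSet, closure_eq_ortho_ortho_of_dense hreg.dense_pfRange⟩⟩
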